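/- arXiv:1909.03174 — 4 statements merged into one kernel-verified Lean document; each statement's English description precedes it below -/
import Mathlib

section
/- The quotient ring (F_q[u]/(u^e))[x]/(f(x)), where f(x) is a monic polynomial of degree m over F_q[u]/(u^e) whose reduction mod u is irreducible over F_q, is isomorphic as a ring to F_{q^m}[u]/(u^e). -/
/-!
Write `S = R[x]/(f)`, `v` for the image of `u` in `S`, `g = f mod u ∈ F_q[x]` and
`Q = q ^ m`. Since `g` is irreducible of degree `m`, it divides `X ^ Q - X`. The image
`x` of the variable is a root of `g` modulo the nilpotent ideal `(v)`; its Teichmüller lift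
`a = x ^ (Q ^ j)` (for `j` large) satisfies `a ^ Q = a`, and then `g(a)` is a nilpotent element
fixed by `z ↦ z ^ Q`, hence zero. So `x ↦ a`, `u ↦ v` defines a ring map
`F_{q^m}[u]/(u^e) → S`. It is onto modulo `v`, hence onto because `v` is nilpotent, and both
rings have `q ^ (e m)` elements.
-/

open Polynomial

theorem Polynomial.Monic.natCard_adjoinRoot {R : Type*} [CommRing R] {f : R[X]} (hf : f.Monic) :
    Nat.card (AdjoinRoot f) = Nat.card R ^ f.natDegree := by
  rw [Nat.card_congr (AdjoinRoot.powerBasis' hf).basis.equivFun.toEquiv, Nat.card_fun,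
    Nat.card_fin]
  rfl

theorem Polynomial.eval₂_sub_eval₂_mem {R A : Type*} [CommRing R] [CommRing A] {I : Ideal A}
    {σ τ : R →+* A} (hστ : ∀ r, σ r - τ r ∈ I) (P : R[X]) {x y : A}
    (hxy : x - y ∈ I) :
    P.eval₂ σ x - P.eval₂ τ y ∈ I := by
  have hcomp : (Ideal.Quotient.mk I).comp σ = (Ideal.Quotient.mk I).comp τ :=
    RingHom.ext fun r => Ideal.Quotient.eq.mpr (hστ r)
  rw [← Ideal.Quotient.eq, hom_eval₂, hom_eval₂, hcomp, Ideal.Quotient.eq.mpr hxy]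

theorem IsNilpotent.eq_zero_of_pow_eq_self {R : Type*} [Ring R] {z : R} (hz : IsNilpotent z)
    {n : ℕ} (hn : 1 < n) (h : z ^ n = z) : z = 0 := by
  have hmul : z * (1 - z ^ (n - 1)) = 0 := by
    rw [mul_sub, mul_one, ← pow_succ', Nat.sub_add_cancel hn.le, h, sub_self]
  exact ((hz.pow_of_pos (by omega)).isUnit_one_sub.mul_left_eq_zero).mp hmul

theorem Subring.eq_top_of_forall_sub_mem_span_singleton {A : Type*} [CommRing A] {B : Subring A}
    {v : A} (hvB : v ∈ B) (hv : IsNilpotent v)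
    (h : ∀ s, ∃ b ∈ B, s - b ∈ Ideal.span {v}) :
    B = ⊤ := by
  have approx : ∀ j s, ∃ b ∈ B, ∃ t, s - b = t * v ^ j := by
    intro j
    induction j with
    | zero => exact fun s => ⟨0, B.zero_mem, s, by simp⟩
    | succ j ih =>
      intro s
      obtain ⟨b, hb, t, ht⟩ := ih s
      obtain ⟨b', hb', ht'⟩ := h t
      obtain ⟨t', ht'⟩ := Ideal.mem_span_singleton'.mp ht'
      exact ⟨b + b' * v ^ j, add_mem hb (mul_mem hb' (pow_mem hvB j)), t',
        by linear_combination ht - v ^ j * ht'⟩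
  obtain ⟨n, hn⟩ := hv
  refine eq_top_iff.mpr fun s _ => ?_
  obtain ⟨b, hb, t, ht⟩ := approx n s
  rw [hn, mul_zero, sub_eq_zero] at ht
  exact ht ▸ hb

namespace FiniteField

variable {F A : Type*} [Field F] [Fintype F] [CommRing A] [Algebra F A]

theorem frobeniusAlgHom_pow_apply (m : ℕ) (x : A) :
    (frobeniusAlgHom F A ^ m) x = x ^ Fintype.card F ^ m := by
  rw [AlgHom.coe_pow, coe_frobeniusAlgHom, pow_iterate]

theorem exists_pow_card_pow_eq_self_sub_mem {I : Ideal A} (hI : I ≤ nilradical A) {m : ℕ}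
    (hm : m ≠ 0) {x : A} (hx : x ^ Fintype.card F ^ m - x ∈ I) :
    ∃ y, y ^ Fintype.card F ^ m = y ∧ y - x ∈ I := by
  set Q := Fintype.card F ^ m
  set φ := frobeniusAlgHom F A ^ m
  have hφ : ∀ j z, (φ ^ j) z = z ^ Q ^ j := fun j z => by
    rw [← pow_mul, frobeniusAlgHom_pow_apply, pow_mul]
  have hφx : ∀ j, (φ ^ j) x - x ∈ I := by
    intro j
    induction j with
    | zero => simp
    | succ j ih =>
      have hsplit : (φ ^ (j + 1)) x - x = (φ x - x) ^ Q ^ j + ((φ ^ j) x - x) := by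
        rw [← hφ, map_sub, pow_succ, AlgHom.mul_apply]
        ring
      rw [hsplit, frobeniusAlgHom_pow_apply]
      exact I.add_mem (I.pow_mem_of_mem hx _ (by positivity)) ih
  obtain ⟨j, hj⟩ := hI hx
  -- `φ` is additive, so `φ ((φ ^ j) x) - (φ ^ j) x = (x ^ Q - x) ^ Q ^ j`, which vanishes.
  refine ⟨(φ ^ j) x, ?_, hφx j⟩
  rw [← frobeniusAlgHom_pow_apply, ← sub_eq_zero, ← AlgHom.mul_apply, ← pow_succ', pow_succ,
    AlgHom.mul_apply, ← map_sub, hφ, frobeniusAlgHom_pow_apply]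
  exact pow_eq_zero_of_le (Nat.lt_pow_self (Nat.one_lt_pow hm Fintype.one_lt_card)).le hj

theorem exists_aeval_eq_zero_sub_mem {g : F[X]} {m : ℕ} (hm : m ≠ 0)
    (hg : g ∣ X ^ Fintype.card F ^ m - X) {I : Ideal A} (hI : I ≤ nilradical A) {x : A}
    (hx : aeval x g ∈ I) : ∃ y, aeval y g = 0 ∧ y - x ∈ I := by
  obtain ⟨h, hgh⟩ := hg
  have hxQ : x ^ Fintype.card F ^ m - x ∈ I := by
    have := congrArg (aeval x) hgh
    rw [map_sub, map_pow, aeval_X, map_mul] at this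
    exact this ▸ I.mul_mem_right _ hx
  obtain ⟨y, hyQ, hyx⟩ := exists_pow_card_pow_eq_self_sub_mem hI hm hxQ
  have hgy : aeval y g ∈ I := by
    have := eval₂_sub_eval₂_mem (σ := algebraMap F A) (τ := algebraMap F A)
      (fun r => by rw [sub_self]; exact I.zero_mem) g hyx
    simpa [aeval_def] using I.add_mem this hx
  refine ⟨y, (mem_nilradical.mp (hI hgy)).eq_zero_of_pow_eq_self
    (Nat.one_lt_pow hm (Fintype.one_lt_card (α := F))) ?_, hyx⟩
  rw [← frobeniusAlgHom_pow_apply, ← aeval_algHom_apply, frobeniusAlgHom_pow_apply, hyQ]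

end FiniteField

namespace AdjoinRoot

theorem sub_algebraMap_mem_span_root {K : Type*} [CommRing K] {p : K[X]}
    (π : AdjoinRoot p →+* K) (hπ0 : π (root p) = 0) (hπa : ∀ a, π (algebraMap K _ a) = a)
    (r : AdjoinRoot p) : r - algebraMap K _ (π r) ∈ Ideal.span {root p} := by
  induction r using AdjoinRoot.induction_on with | ih P => ?_
  have hπ : π.comp (algebraMap K (AdjoinRoot p)) = RingHom.id K := RingHom.ext hπa
  have hπP : π (mk p P) = P.coeff 0 := by
    rw [← aeval_eq, aeval_def, hom_eval₂, hπ, hπ0, eval₂_at_zero, RingHom.id_apply]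
  rw [hπP, algebraMap_eq, ← mk_C, ← map_sub, Ideal.mem_span_singleton, ← mk_X]
  exact map_dvd _ X_dvd_sub_C

theorem mk_sub_aeval_map_mem_span {K : Type*} [CommRing K] {p : K[X]}
    {π : AdjoinRoot p →+* K} (hπ0 : π (root p) = 0) (hπa : ∀ a, π (algebraMap K _ a) = a)
    {f : (AdjoinRoot p)[X]} (P : (AdjoinRoot p)[X]) {y : AdjoinRoot f}
    (hy : root f - y ∈ Ideal.span {of f (root p)}) :
    mk f P - aeval y (P.map π) ∈ Ideal.span {of f (root p)} := by
  have hres : ∀ r, of f r - algebraMap K _ (π r) ∈ Ideal.span {of f (root p)} := by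
    intro r
    obtain ⟨t, ht⟩ := Ideal.mem_span_singleton'.mp (sub_algebraMap_mem_span_root π hπ0 hπa r)
    exact Ideal.mem_span_singleton'.mpr ⟨of f t, by rw [← map_mul, ht, map_sub]; rfl⟩
  rw [← aeval_eq, aeval_def, aeval_def, eval₂_map]
  exact eval₂_sub_eval₂_mem hres P hy

theorem of_root_X_pow_pow_eq_zero {K : Type*} [CommRing K] {e : ℕ}
    {f : (AdjoinRoot (X ^ e : K[X]))[X]} : of f (root (X ^ e : K[X])) ^ e = 0 := by
  rw [← map_pow, ← mk_X, ← map_pow, mk_self, map_zero]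

variable {F : Type*} [Field F] [Fintype F] {e : ℕ} {π : AdjoinRoot (X ^ e : F[X]) →+* F}
  {f : (AdjoinRoot (X ^ e : F[X]))[X]}

theorem exists_aeval_map_eq_zero_sub_root_mem (hπ0 : π (root (X ^ e)) = 0)
    (hπa : ∀ a, π (algebraMap F _ a) = a) (hirr : Irreducible (f.map π)) :
    ∃ a : AdjoinRoot f, aeval a (f.map π) = 0 ∧
      a - root f ∈ Ideal.span {of f (root (X ^ e : F[X]))} := by
  have hdvd : f.map π ∣ X ^ Fintype.card F ^ (f.map π).natDegree - X := by
    rw [← Nat.card_eq_fintype_card]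
    exact hirr.natDegree_dvd_iff_dvd_X_pow_card_pow_sub_X.mp dvd_rfl
  have hnil : Ideal.span {of f (root (X ^ e : F[X]))} ≤ nilradical _ :=
    (Ideal.span_singleton_le_iff_mem _).mpr (mem_nilradical.mpr ⟨e, of_root_X_pow_pow_eq_zero⟩)
  refine FiniteField.exists_aeval_eq_zero_sub_mem hirr.natDegree_pos.ne' hdvd hnil ?_
  have := mk_sub_aeval_map_mem_span hπ0 hπa f (sub_self (root f) ▸ Ideal.zero_mem _)
  rwa [mk_self, zero_sub, neg_mem_iff] at this

theorem exists_surjective_ringHom_of_irreducible_map {L : Type*} [CommRing L]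
    (hπ0 : π (root (X ^ e)) = 0) (hπa : ∀ a, π (algebraMap F _ a) = a)
    (hirr : Irreducible (f.map π)) (κ : L →+* AdjoinRoot (f.map π))
    (hκ : Function.Surjective κ) :
    ∃ ψ : AdjoinRoot (X ^ e : L[X]) →+* AdjoinRoot f, Function.Surjective ψ := by
  obtain ⟨a, ha, hxa⟩ := exists_aeval_map_eq_zero_sub_root_mem hπ0 hπa hirr
  let ι : AdjoinRoot (f.map π) →+* AdjoinRoot f :=
    lift (algebraMap F _) a ((aeval_def a _).symm.trans ha)
  let ψ : AdjoinRoot (X ^ e : L[X]) →+* AdjoinRoot f :=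
    lift (ι.comp κ) (of f (root (X ^ e))) (by rw [eval₂_X_pow, of_root_X_pow_pow_eq_zero])
  refine ⟨ψ, RingHom.range_eq_top.mp <| Subring.eq_top_of_forall_sub_mem_span_singleton
    ⟨_, lift_root _⟩ ⟨e, of_root_X_pow_pow_eq_zero⟩ fun s => ?_⟩
  induction s using AdjoinRoot.induction_on with | ih P => ?_
  obtain ⟨l, hl⟩ := hκ (mk _ (P.map π))
  refine ⟨ι (κ l), ⟨of _ l, lift_of _⟩, ?_⟩
  rw [hl, lift_mk]
  exact mk_sub_aeval_map_mem_span hπ0 hπa P (by rwa [← neg_sub, neg_mem_iff])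

end AdjoinRoot

theorem stmt_1_general (q e m : ℕ)
    (F Fm : Type*) [Field F] [Fintype F] [Field Fm] [Fintype Fm]
    (hcardF : Fintype.card F = q) (hcardFm : Fintype.card Fm = q ^ m)
    (π : AdjoinRoot ((X : Polynomial F) ^ e) →+* F)
    (hπ0 : π (AdjoinRoot.root ((X : Polynomial F) ^ e)) = 0)
    (hπa : ∀ a : F, π (algebraMap F (AdjoinRoot ((X : Polynomial F) ^ e)) a) = a)
    (f : Polynomial (AdjoinRoot ((X : Polynomial F) ^ e)))
    (hmonic : f.Monic) (hdeg : f.natDegree = m)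
    (hirr : Irreducible (f.map π)) :
    Nonempty (AdjoinRoot f ≃+* AdjoinRoot ((X : Polynomial Fm) ^ e)) := by
  have : Fact (Irreducible (f.map π)) := ⟨hirr⟩
  have : Module.Finite F (AdjoinRoot (f.map π)) := (hmonic.map π).finite_adjoinRoot
  have : Finite (AdjoinRoot (f.map π)) := Module.finite_of_finite F
  have : Fintype (AdjoinRoot (f.map π)) := .ofFinite _
  have hcardK : Fintype.card Fm = Fintype.card (AdjoinRoot (f.map π)) := by
    rw [hcardFm, ← hcardF, Fintype.card_eq_nat_card (α := AdjoinRoot _),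
      (hmonic.map π).natCard_adjoinRoot, hmonic.natDegree_map, hdeg, Nat.card_eq_fintype_card]
  let κ := FiniteField.ringEquivOfCardEq hcardK
  obtain ⟨ψ, hψ⟩ := AdjoinRoot.exists_surjective_ringHom_of_irreducible_map hπ0 hπa hirr
    κ.toRingHom κ.surjective
  have : Module.Finite Fm (AdjoinRoot ((X : Fm[X]) ^ e)) := (monic_X_pow e).finite_adjoinRoot
  have : Finite (AdjoinRoot ((X : Fm[X]) ^ e)) := Module.finite_of_finite Fm
  have hcard : Nat.card (AdjoinRoot ((X : Fm[X]) ^ e)) ≤ Nat.card (AdjoinRoot f) := by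
    rw [hmonic.natCard_adjoinRoot, (monic_X_pow e).natCard_adjoinRoot,
      (monic_X_pow e).natCard_adjoinRoot, natDegree_X_pow, natDegree_X_pow, hdeg,
      Nat.card_eq_fintype_card, Nat.card_eq_fintype_card, hcardF, hcardFm, ← pow_mul, ← pow_mul,
      mul_comm]
  exact ⟨(RingEquiv.ofBijective ψ (hψ.bijective_of_nat_card_le hcard)).symm⟩

/-- `(F_q[u]/(u^e))[x]/(f(x))`, with `f` monic of degree `m` over
`R = F_q[u]/(u^e)` whose reduction mod `u` is irreducible over `F_q`, is isomorphic
as a ring to `F_{q^m}[u]/(u^e)`.  Here `π : R → F_q` is the residue map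
(characterized by `π(u) = 0` and `π ∘ (algebraMap F_q R) = id`). -/
theorem stmt_1 (p q e m : ℕ) (hp : p.Prime) (hq : ∃ k : ℕ, 1 ≤ k ∧ q = p ^ k)
    (he : 1 ≤ e) (hm : 1 ≤ m)
    (F Fm : Type*) [Field F] [Fintype F] [Field Fm] [Fintype Fm]
    (hcardF : Fintype.card F = q) (hcardFm : Fintype.card Fm = q ^ m)
    (π : AdjoinRoot ((X : Polynomial F) ^ e) →+* F)
    (hπ0 : π (AdjoinRoot.root ((X : Polynomial F) ^ e)) = 0)
    (hπa : ∀ a : F, π (algebraMap F (AdjoinRoot ((X : Polynomial F) ^ e)) a) = a)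
    (f : Polynomial (AdjoinRoot ((X : Polynomial F) ^ e)))
    (hmonic : f.Monic) (hdeg : f.natDegree = m)
    (hirr : Irreducible (f.map π)) :
    Nonempty (AdjoinRoot f ≃+* AdjoinRoot ((X : Polynomial Fm) ^ e)) :=
  stmt_1_general q e m F Fm hcardF hcardFm π hπ0 hπa f hmonic hdeg hirr
end

section
/- If C is a Hermitian self-dual linear code of length n over R = F_q[u]/(u^3) (q a square), then Tor_1(C) is a Hermitian self-dual linear code of length n over F_q. -/
/-!
Write `x ∈ R` as `x₀ + x₁ u + x₂ u²` with `xₖ ∈ F_q`; reduction mod `u` is `x ↦ x₀`, and the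
conjugation acts coefficientwise as `a ↦ a ^ r`.

If `u v, u c ∈ C`, self-orthogonality gives `u² ⟨c, v⟩_H = 0`, so the constant coefficient
`Σ cᵢ₀ vᵢ₀ ^ r` of `⟨c, v⟩_H` vanishes: `Tor_1(C)` is self-orthogonal.

Conversely let `y ⊥ Tor_1(C)`. We look for `v = y + u z` with `u v ∈ C^⊥ = C`, i.e. with the
coefficients `Σ cᵢ₀ yᵢ ^ r` and `Σ (cᵢ₀ zᵢ ^ r + cᵢ₁ yᵢ ^ r)` of `⟨c, v⟩_H` vanishing for all
`c ∈ C`. The first holds because `c₀ ∈ Tor_1(C)`. The `F_q`-linear form `c ↦ Σ cᵢ₁ yᵢ ^ r` on `C`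
vanishes when `c₀ = 0` (then `c = u c'` and `c₁ = c'₀ ∈ Tor_1(C)`), so it equals `c ↦ Σ cᵢ₀ wᵢ`
for some `w`; as `q = r²`, Frobenius is onto and `zᵢ ^ r = -wᵢ` can be solved.
-/

open Polynomial

/-- `R = F_q[u]/(u^3)`. -/
abbrev R3 (F : Type*) [Field F] : Type _ := AdjoinRoot ((X : Polynomial F) ^ 3)

/-- Hermitian dual (as a set) of a linear code over `R = F_q[u]/(u^3)`, with respect to
`⟨u,v⟩_H = Σ u_i bar(v_i)`. -/
def HdualR {F : Type*} [Field F] {n : ℕ} (bar : R3 F →+* R3 F)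
    (C : Submodule (R3 F) (Fin n → R3 F)) : Set (Fin n → R3 F) :=
  { v | ∀ c ∈ C, ∑ i, c i * bar (v i) = 0 }

/-- Hermitian dual (as a set) of a code `D ⊆ F_q^n` with `⟨x,y⟩_H = Σ x_i y_i^r`,
`r = √q`. -/
def HdualF {F : Type*} [Field F] (r : ℕ) {n : ℕ} (D : Set (Fin n → F)) :
    Set (Fin n → F) :=
  { y | ∀ x ∈ D, ∑ i, x i * y i ^ r = 0 }

namespace R3

variable {F : Type*} [Field F] {r : ℕ} {bar : R3 F →+* R3 F}

local notation "u" => AdjoinRoot.root ((X : Polynomial F) ^ 3)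

variable (F) in
theorem root_pow_three : u ^ 3 = 0 := by
  rw [← AdjoinRoot.mk_X, ← map_pow, AdjoinRoot.mk_self]

variable (F) in
noncomputable def basis : Module.Basis (Fin 3) F (R3 F) :=
  (AdjoinRoot.powerBasis' (monic_X_pow 3)).basis.reindex (finCongr (natDegree_X_pow 3))

theorem basis_apply (i : Fin 3) : basis F i = u ^ (i : ℕ) := by
  simp only [basis, Module.Basis.coe_reindex, PowerBasis.coe_basis, AdjoinRoot.powerBasis'_gen,
    Function.comp_apply]
  rfl

noncomputable def coeff (i : Fin 3) : R3 F →ₗ[F] F := (basis F).coord i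

noncomputable def mk (a b c : F) : R3 F :=
  algebraMap F (R3 F) a + u * algebraMap F (R3 F) b + u ^ 2 * algebraMap F (R3 F) c

theorem mk_eq_sum_smul_basis (a b c : F) : mk a b c = ∑ i, ![a, b, c] i • basis F i := by
  simp [mk, Fin.sum_univ_three, basis_apply, Algebra.smul_def, mul_comm]

@[simp]
theorem coeff_mk (a b c : F) (i : Fin 3) : coeff i (mk a b c) = ![a, b, c] i := by
  rw [mk_eq_sum_smul_basis, coeff, Module.Basis.coord_apply, Module.Basis.repr_sum_self]

theorem mk_coeff (x : R3 F) : mk (coeff 0 x) (coeff 1 x) (coeff 2 x) = x := by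
  conv_rhs => rw [← (basis F).sum_repr x]
  rw [mk_eq_sum_smul_basis]
  refine Finset.sum_congr rfl fun i _ => ?_
  fin_cases i <;> rfl

theorem mk_eq_zero_iff {a b c : F} : mk a b c = 0 ↔ a = 0 ∧ b = 0 ∧ c = 0 := by
  refine ⟨fun h => ?_, fun ⟨ha, hb, hc⟩ => by simp [mk, ha, hb, hc]⟩
  have hcoeff (i : Fin 3) : ![a, b, c] i = 0 := by rw [← coeff_mk, h, map_zero]
  exact ⟨hcoeff 0, hcoeff 1, hcoeff 2⟩

theorem mk_mul_mk (a b c a' b' c' : F) :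
    mk a b c * mk a' b' c' = mk (a * a') (a * b' + b * a') (a * c' + b * b' + c * a') := by
  simp only [mk, map_add, map_mul]
  linear_combination (norm := (simp only [map_add, map_mul]; ring))
    (u * algebraMap F (R3 F) (c * c') + algebraMap F (R3 F) (b * c' + c * b')) * root_pow_three F

theorem root_mul_mk (a b c : F) : u * mk a b c = mk 0 a b := by
  simp only [mk, map_zero]
  linear_combination algebraMap F (R3 F) c * root_pow_three F

@[simp]
theorem coeff_zero_mul (x y : R3 F) : coeff 0 (x * y) = coeff 0 x * coeff 0 y := by
  rw [← mk_coeff x, ← mk_coeff y, mk_mul_mk]; simp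

@[simp]
theorem coeff_one_mul (x y : R3 F) :
    coeff 1 (x * y) = coeff 0 x * coeff 1 y + coeff 1 x * coeff 0 y := by
  rw [← mk_coeff x, ← mk_coeff y, mk_mul_mk]; simp

theorem root_mul_eq_zero_iff (x : R3 F) : u * x = 0 ↔ coeff 0 x = 0 ∧ coeff 1 x = 0 := by
  rw [← mk_coeff x, root_mul_mk, mk_eq_zero_iff]
  simp

theorem root_sq_mul_eq_zero_iff (x : R3 F) : u ^ 2 * x = 0 ↔ coeff 0 x = 0 := by
  rw [← mk_coeff x, sq, mul_assoc, root_mul_mk, root_mul_mk, mk_eq_zero_iff]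
  simp

theorem apply_eq_coeff_zero (π : R3 F →+* F) (hπ0 : π u = 0)
    (hπa : ∀ a : F, π (algebraMap F (R3 F) a) = a) (x : R3 F) : π x = coeff 0 x := by
  conv_lhs => rw [← mk_coeff x]
  simp only [mk, map_add, map_mul, map_pow, hπ0, hπa]
  ring

theorem map_mk (hbar1 : ∀ a : F, bar (algebraMap F (R3 F) a) = algebraMap F (R3 F) (a ^ r))
    (hbar2 : bar u = u) (a b c : F) : bar (mk a b c) = mk (a ^ r) (b ^ r) (c ^ r) := by
  simp only [mk, map_add, map_mul, map_pow, hbar1, hbar2]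

theorem coeff_map (hbar1 : ∀ a : F, bar (algebraMap F (R3 F) a) = algebraMap F (R3 F) (a ^ r))
    (hbar2 : bar u = u) (i : Fin 3) (x : R3 F) : coeff i (bar x) = coeff i x ^ r := by
  rw [← mk_coeff x, map_mk hbar1 hbar2]
  fin_cases i <;> simp

variable {n : ℕ}

def tor1 (C : Submodule (R3 F) (Fin n → R3 F)) : Set (Fin n → F) :=
  {w | ∃ v : Fin n → R3 F, u • v ∈ C ∧ w = fun i => coeff 0 (v i)}

variable {C : Submodule (R3 F) (Fin n → R3 F)}

theorem coeff_zero_mem_tor1 {c : Fin n → R3 F} (hc : c ∈ C) :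
    (fun i => coeff 0 (c i)) ∈ tor1 C :=
  ⟨c, C.smul_mem u hc, rfl⟩

theorem coeff_one_mem_tor1 {c : Fin n → R3 F} (hc : c ∈ C) (h0 : ∀ i, coeff 0 (c i) = 0) :
    (fun i => coeff 1 (c i)) ∈ tor1 C := by
  refine ⟨fun i => mk (coeff 1 (c i)) (coeff 2 (c i)) 0, ?_, by ext i; simp⟩
  convert hc using 1
  ext i
  rw [Pi.smul_apply, smul_eq_mul, root_mul_mk, ← h0 i, mk_coeff]

theorem exists_sum_coeff_one_mul_eq {y : Fin n → F} (hy : ∀ x ∈ tor1 C, ∑ i, x i * y i = 0) :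
    ∃ w : Fin n → F, ∀ c ∈ C, ∑ i, coeff 1 (c i) * y i = ∑ i, coeff 0 (c i) * w i := by
  let E := C.restrictScalars F
  let L : Fin n → E →ₗ[F] F := fun i => coeff 0 ∘ₗ LinearMap.proj i ∘ₗ E.subtype
  let K : E →ₗ[F] F := ∑ i, y i • coeff 1 ∘ₗ LinearMap.proj i ∘ₗ E.subtype
  have hker : ⨅ i, LinearMap.ker (L i) ≤ LinearMap.ker K := by
    intro c hc
    simp only [Submodule.mem_iInf, LinearMap.mem_ker] at hc ⊢
    simpa [K, mul_comm] using hy _ (coeff_one_mem_tor1 c.2 hc)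
  obtain ⟨w, hw⟩ :=
    (Submodule.mem_span_range_iff_exists_fun F).1 (mem_span_of_iInf_ker_le_ker hker)
  refine ⟨w, fun c hc => ?_⟩
  simpa [K, L, mul_comm] using (LinearMap.congr_fun hw ⟨c, hc⟩).symm

theorem tor1_subset_hdualF
    (hbar1 : ∀ a : F, bar (algebraMap F (R3 F) a) = algebraMap F (R3 F) (a ^ r))
    (hbar2 : bar u = u) (hC : (C : Set (Fin n → R3 F)) ⊆ HdualR bar C) :
    tor1 C ⊆ HdualF r (tor1 C) := by
  rintro _ ⟨v, hv, rfl⟩ _ ⟨c, hc, rfl⟩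
  have h : u ^ 2 * ∑ i, c i * bar (v i) = 0 := by
    rw [← hC hv _ hc, Finset.mul_sum]
    refine Finset.sum_congr rfl fun i _ => ?_
    simp only [Pi.smul_apply, smul_eq_mul, map_mul, hbar2]
    ring
  simpa [coeff_map hbar1 hbar2] using (root_sq_mul_eq_zero_iff _).1 h

theorem hdualF_tor1_subset
    (hbar1 : ∀ a : F, bar (algebraMap F (R3 F) a) = algebraMap F (R3 F) (a ^ r))
    (hbar2 : bar u = u) (hsurj : Function.Surjective fun a : F => a ^ r)
    (hC : HdualR bar C ⊆ C) : HdualF r (tor1 C) ⊆ tor1 C := by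
  intro y hy
  obtain ⟨w, hw⟩ := exists_sum_coeff_one_mul_eq (y := fun i => y i ^ r) hy
  choose z hz using fun i => hsurj (-w i)
  refine ⟨fun i => mk (y i) (z i) 0, hC fun c hc => ?_, by ext i; simp⟩
  have hS : u * ∑ i, c i * bar (mk (y i) (z i) 0) = 0 := by
    rw [root_mul_eq_zero_iff]
    simp only [map_sum, coeff_zero_mul, coeff_one_mul, coeff_map hbar1 hbar2, coeff_mk]
    constructor
    · exact hy _ (coeff_zero_mem_tor1 hc)
    · simp [hz, hw c hc, Finset.sum_add_distrib]
  rw [← hS, Finset.mul_sum]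
  refine Finset.sum_congr rfl fun i _ => ?_
  simp only [Pi.smul_apply, smul_eq_mul, map_mul, hbar2]
  ring

end R3

theorem stmt_4_general (r n : ℕ)
    (F : Type*) [Field F] [Fintype F] (hcard : Fintype.card F = r ^ 2)
    (bar : R3 F →+* R3 F)
    (hbar1 : ∀ a : F, bar (algebraMap F (R3 F) a) = algebraMap F (R3 F) (a ^ r))
    (hbar2 : bar (AdjoinRoot.root ((X : Polynomial F) ^ 3)) =
      AdjoinRoot.root ((X : Polynomial F) ^ 3))
    (π : R3 F →+* F)
    (hπ0 : π (AdjoinRoot.root ((X : Polynomial F) ^ 3)) = 0)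
    (hπa : ∀ a : F, π (algebraMap F (R3 F) a) = a)
    (C : Submodule (R3 F) (Fin n → R3 F))
    (hC : (C : Set (Fin n → R3 F)) = HdualR bar C)
    (T1 : Set (Fin n → F))
    (hT1 : T1 = { w | ∃ v : Fin n → R3 F,
      (AdjoinRoot.root ((X : Polynomial F) ^ 3)) • v ∈ C ∧ w = fun i => π (v i) }) :
    T1 = HdualF r T1 := by
  have hT : T1 = R3.tor1 C := by
    simp only [hT1, R3.apply_eq_coeff_zero π hπ0 hπa]
    rfl
  have hsurj : Function.Surjective fun a : F => a ^ r := fun a =>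
    ⟨a ^ r, by dsimp only; rw [← pow_mul, ← sq, ← hcard, FiniteField.pow_card]⟩
  subst hT
  exact (R3.tor1_subset_hdualF hbar1 hbar2 hC.subset).antisymm
    (R3.hdualF_tor1_subset hbar1 hbar2 hsurj hC.symm.subset)

/-- If `C` is a Hermitian self-dual linear code of length `n` over
`R = F_q[u]/(u^3)` (`q = r^2` a square), then `Tor_1(C)` is a Hermitian self-dual code
of length `n` over `F_q`. -/
theorem stmt_4 (p j r n : ℕ) (hp : p.Prime) (hj : 1 ≤ j) (hr : r = p ^ j)
    (F : Type*) [Field F] [Fintype F] (hcard : Fintype.card F = r ^ 2)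
    (bar : R3 F →+* R3 F)
    (hbar1 : ∀ a : F, bar (algebraMap F (R3 F) a) = algebraMap F (R3 F) (a ^ r))
    (hbar2 : bar (AdjoinRoot.root ((X : Polynomial F) ^ 3)) =
      AdjoinRoot.root ((X : Polynomial F) ^ 3))
    (π : R3 F →+* F)
    (hπ0 : π (AdjoinRoot.root ((X : Polynomial F) ^ 3)) = 0)
    (hπa : ∀ a : F, π (algebraMap F (R3 F) a) = a)
    (C : Submodule (R3 F) (Fin n → R3 F))
    (hC : (C : Set (Fin n → R3 F)) = HdualR bar C)
    (T1 : Set (Fin n → F))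
    (hT1 : T1 = { w | ∃ v : Fin n → R3 F,
      (AdjoinRoot.root ((X : Polynomial F) ^ 3)) • v ∈ C ∧ w = fun i => π (v i) }) :
    T1 = HdualF r T1 :=
  stmt_4_general r n F hcard bar hbar1 hbar2 π hπ0 hπa C hC T1 hT1
end

section
/- Let C_1 be a Hermitian self-dual code of length n over F_q (q a square) with generator matrix [[I_k, A_2, A_{30}, A_{40}],[0, I_l, B_3, B_{40}]] in block form with column blocks of sizes k, l, l, k. Then the matrix H = [[\bar{A_{30}}, \bar{A_{40}}],[\bar{B_3}, \bar{B_{40}}]] is invertible. -/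
/-!
Write `X† = (σ X)ᵀ` for the involution `σ : a ↦ a ^ r` and `M = [[A₃₀, A₄₀], [B₃, B₄₀]]`.
The orthogonality relations, together with the conjugate transpose of the middle one, say
exactly that `M * (-M†) = [[1 + A₂ A₂†, A₂], [A₂†, 1]]`. This Gram matrix factors as
`[[1, A₂], [0, 1]] * [[1, 0], [A₂†, 1]]` and is therefore invertible, so `M` has a right inverse;
since `M` is square up to reindexing, that inverse is two-sided, and applying the ring
homomorphism `σ` entrywise gives the inverse of `H = σ M`.
-/

/-- Conjugate transpose `X^† = (bar X)^T` with `bar` the entrywise map `a ↦ a^r`. -/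
def daggerF {F : Type*} [Field F] (r : ℕ) {α β : Type*} (M : Matrix α β F) :
    Matrix β α F :=
  (M.map fun a => a ^ r).transpose

namespace Matrix

variable {R : Type*} {m n : Type*} [Fintype m] [Fintype n] [DecidableEq m] [DecidableEq n]

theorem fromBlocks_one_add_mul_mul_fromBlocks_eq_one [Ring R] (A : Matrix m n R)
    (Z : Matrix n m R) :
    fromBlocks (1 + A * Z) A Z 1 * fromBlocks 1 (-A) (-Z) (1 + Z * A) = 1 := by
  rw [fromBlocks_multiply, ← fromBlocks_one]
  congr 1 <;> simp only [Matrix.mul_add, Matrix.add_mul, Matrix.mul_neg, Matrix.mul_one,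
    Matrix.one_mul, Matrix.mul_assoc] <;> abel

variable [CommRing R] (σ : R →+* R)

theorem transpose_map_transpose_map_of_involutive (hσ : Function.Involutive σ) {α β : Type*}
    (M : Matrix α β R) : ((M.map σ)ᵀ.map σ)ᵀ = M := by
  ext i j
  exact hσ (M i j)

theorem mul_neg_transpose_map_fromBlocks (hσ : Function.Involutive σ)
    (A2 A30 : Matrix m n R) (A40 : Matrix m m R) (B3 : Matrix n n R) (B40 : Matrix n m R)
    (h1 : 1 + A2 * (A2.map σ)ᵀ + A30 * (A30.map σ)ᵀ + A40 * (A40.map σ)ᵀ = 0)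
    (h2 : A2 + A30 * (B3.map σ)ᵀ + A40 * (B40.map σ)ᵀ = 0)
    (h3 : 1 + B3 * (B3.map σ)ᵀ + B40 * (B40.map σ)ᵀ = 0) :
    fromBlocks A30 A40 B3 B40 * -((fromBlocks A30 A40 B3 B40).map σ)ᵀ =
      fromBlocks (1 + A2 * (A2.map σ)ᵀ) A2 (A2.map σ)ᵀ 1 := by
  have h2' : (A2.map σ)ᵀ + B3 * (A30.map σ)ᵀ + B40 * (A40.map σ)ᵀ = 0 := by
    have := congrArg (fun X => (X.map σ)ᵀ) h2
    simpa only [Matrix.map_add σ (map_add σ), Matrix.map_zero σ (map_zero σ), Matrix.map_mul,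
      transpose_add, transpose_mul, transpose_zero, transpose_map_transpose_map_of_involutive σ hσ] using this
  rw [fromBlocks_map, fromBlocks_transpose, fromBlocks_neg, fromBlocks_multiply]
  simp only [Matrix.mul_neg]
  congr 1
  · linear_combination (norm := abel) -h1
  · linear_combination (norm := abel) -h2
  · linear_combination (norm := abel) -h2'
  · linear_combination (norm := abel) -h3

theorem exists_inverse_map_fromBlocks_of_orthogonal (hσ : Function.Involutive σ)
    (A2 A30 : Matrix m n R) (A40 : Matrix m m R) (B3 : Matrix n n R) (B40 : Matrix n m R)
    (h1 : 1 + A2 * (A2.map σ)ᵀ + A30 * (A30.map σ)ᵀ + A40 * (A40.map σ)ᵀ = 0)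
    (h2 : A2 + A30 * (B3.map σ)ᵀ + A40 * (B40.map σ)ᵀ = 0)
    (h3 : 1 + B3 * (B3.map σ)ᵀ + B40 * (B40.map σ)ᵀ = 0) :
    ∃ J : Matrix (n ⊕ m) (m ⊕ n) R,
      (fromBlocks A30 A40 B3 B40).map σ * J = 1 ∧ J * (fromBlocks A30 A40 B3 B40).map σ = 1 := by
  set M := fromBlocks A30 A40 B3 B40
  set J := -(M.map σ)ᵀ * fromBlocks 1 (-A2) (-(A2.map σ)ᵀ) (1 + (A2.map σ)ᵀ * A2)
  have hMJ : M * J = 1 := by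
    rw [← Matrix.mul_assoc, mul_neg_transpose_map_fromBlocks σ hσ A2 A30 A40 B3 B40 h1 h2 h3,
      fromBlocks_one_add_mul_mul_fromBlocks_eq_one]
  have hJM : J * M = 1 := (mul_eq_one_comm_of_equiv (Equiv.sumComm m n)).mp hMJ
  refine ⟨J.map σ, ?_, ?_⟩
  · rw [← Matrix.map_mul, hMJ, Matrix.map_one σ (map_zero σ) (map_one σ)]
  · rw [← Matrix.map_mul, hJM, Matrix.map_one σ (map_zero σ) (map_one σ)]

end Matrix

theorem FiniteField.iterateFrobenius_involutive_of_card_eq_sq {F : Type*} [Field F] [Fintype F]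
    {p : ℕ} [ExpChar F p] {j : ℕ} (hcard : Fintype.card F = (p ^ j) ^ 2) :
    Function.Involutive (iterateFrobenius F p j) := fun a => by
  rw [iterateFrobenius_def, iterateFrobenius_def, ← pow_mul, ← sq, ← hcard, pow_card]

theorem stmt_10_general (p j r k l : ℕ) (hp : p.Prime) (hr : r = p ^ j)
    (F : Type*) [Field F] [Fintype F] (hcard : Fintype.card F = r ^ 2)
    (A2 : Matrix (Fin k) (Fin l) F) (A30 : Matrix (Fin k) (Fin l) F)
    (A40 : Matrix (Fin k) (Fin k) F) (B3 : Matrix (Fin l) (Fin l) F)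
    (B40 : Matrix (Fin l) (Fin k) F)
    (h1 : (1 : Matrix (Fin k) (Fin k) F) + A2 * daggerF r A2 + A30 * daggerF r A30 +
      A40 * daggerF r A40 = 0)
    (h2 : A2 + A30 * daggerF r B3 + A40 * daggerF r B40 = 0)
    (h3 : (1 : Matrix (Fin l) (Fin l) F) + B3 * daggerF r B3 + B40 * daggerF r B40 = 0) :
    ∃ J : Matrix (Fin l ⊕ Fin k) (Fin k ⊕ Fin l) F,
      Matrix.fromBlocks (A30.map fun a => a ^ r) (A40.map fun a => a ^ r)
        (B3.map fun a => a ^ r) (B40.map fun a => a ^ r) * J = 1 ∧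
      J * Matrix.fromBlocks (A30.map fun a => a ^ r) (A40.map fun a => a ^ r)
        (B3.map fun a => a ^ r) (B40.map fun a => a ^ r) = 1 := by
  subst hr
  have : Fact p.Prime := ⟨hp⟩
  have : CharP F p := charP_of_card_eq_prime_pow (hcard.trans (pow_mul p j 2).symm)
  rw [← Matrix.fromBlocks_map]
  -- `daggerF (p ^ j) X` and `(X.map (iterateFrobenius F p j))ᵀ` agree by definition.
  exact Matrix.exists_inverse_map_fromBlocks_of_orthogonal (iterateFrobenius F p j)
    (FiniteField.iterateFrobenius_involutive_of_card_eq_sq hcard) A2 A30 A40 B3 B40 h1 h2 h3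

/-- Let `C_1` be a Hermitian self-dual code of length `n = 2(k+l)` over
`F_q` (`q = r^2`) with generator matrix `[[I_k, A_2, A_30, A_40],[0, I_l, B_3, B_40]]`
(column blocks of sizes `k, l, l, k`), so that the rows are pairwise Hermitian
orthogonal.  Then `H = [[bar A_30, bar A_40],[bar B_3, bar B_40]]` is invertible. -/
theorem stmt_10 (p j r k l n : ℕ) (hp : p.Prime) (hj : 1 ≤ j) (hr : r = p ^ j)
    (hn : n = 2 * (k + l))
    (F : Type*) [Field F] [Fintype F] (hcard : Fintype.card F = r ^ 2)
    (A2 : Matrix (Fin k) (Fin l) F) (A30 : Matrix (Fin k) (Fin l) F)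
    (A40 : Matrix (Fin k) (Fin k) F) (B3 : Matrix (Fin l) (Fin l) F)
    (B40 : Matrix (Fin l) (Fin k) F)
    (h1 : (1 : Matrix (Fin k) (Fin k) F) + A2 * daggerF r A2 + A30 * daggerF r A30 +
      A40 * daggerF r A40 = 0)
    (h2 : A2 + A30 * daggerF r B3 + A40 * daggerF r B40 = 0)
    (h3 : (1 : Matrix (Fin l) (Fin l) F) + B3 * daggerF r B3 + B40 * daggerF r B40 = 0) :
    ∃ J : Matrix (Fin l ⊕ Fin k) (Fin k ⊕ Fin l) F,
      Matrix.fromBlocks (A30.map fun a => a ^ r) (A40.map fun a => a ^ r)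
        (B3.map fun a => a ^ r) (B40.map fun a => a ^ r) * J = 1 ∧
      J * Matrix.fromBlocks (A30.map fun a => a ^ r) (A40.map fun a => a ^ r)
        (B3.map fun a => a ^ r) (B40.map fun a => a ^ r) = 1 :=
  stmt_10_general p j r k l hp hr F hcard A2 A30 A40 B3 B40 h1 h2 h3
end

section
/- Let q be a square and n odd. Then there are no Hermitian self-dual linear codes of length n over F_q[u]/(u^3); consequently (for q = 9^m type settings) there are no Hermitian self-dual A × Z_3-quasi-abelian codes in F_{3^m}[A × Z_3 × B] whenever |B| is odd. -/
open Polynomial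

/-!
Over a finite field `K`, let `b` be a nondegenerate bilinear form on `V` and `E : V → V` injective.
If a subspace `C` satisfies `C = E⁻¹(C^⊥)`, then `|C| = |C^⊥|`, so
`dim C = dim C^⊥ = dim V - dim C` and `dim V = 2 dim C` is even.

A Hermitian self-dual code of length `n` over `R = F_q[u]/(u^3)` is such a subspace of the
`F_q`-space `R^n`, of dimension `3n`, for `b(c, v) = τ(∑ cᵢ vᵢ)` and `E` the coordinatewise
conjugation, where `τ` takes the coefficient of `u^2`: since `τ(y s) = 0` for all `y ∈ R` forces
`s = 0` and `C` is an `R`-module, the products `∑ cᵢ bar(vᵢ)` vanish on `C` as soon as their images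
under `τ` do. Hence `3n` is even.

For quasi-abelian codes in `F[A × Z₃ × B]` one first multiplies by the idempotent
`e = |A|⁻¹ ∑_{a ∈ A} a`, which exists because `3 ∤ |A|`. It is self-adjoint for the coefficientwise dot
product, commutes with the Frobenius, and its image, the functions constant along `A`, has
dimension `3|B|`. The code cut down to this image is self-dual there in the above sense, so `3|B|`
is even.
-/

open Module

theorem finrank_eq_of_natCard_eq {K V W : Type*} [Field K] [Finite K] [AddCommGroup V] [Module K V]
    [Module.Finite K V] [AddCommGroup W] [Module K W] [Module.Finite K W]
    (h : Nat.card V = Nat.card W) : finrank K V = finrank K W := by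
  rw [natCard_eq_pow_finrank (K := K) (V := V), natCard_eq_pow_finrank (K := K) (V := W)] at h
  exact Nat.pow_right_injective Finite.one_lt_card h

section SelfDual

variable {K V : Type*} [Field K] [Finite K] [AddCommGroup V] [Module K V] [FiniteDimensional K V]

theorem two_mul_finrank_eq_of_forall_mem_iff (b : LinearMap.BilinForm K V) (hb : b.SeparatingRight)
    {E : V → V} (hE : Function.Injective E) {C : Submodule K V}
    (hC : ∀ v, v ∈ C ↔ ∀ c ∈ C, b c (E v) = 0) :
    2 * finrank K C = finrank K V := by
  have : Finite V := Module.finite_of_finite K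
  have hcard : Nat.card C = Nat.card (b.orthogonal C) :=
    Nat.card_congr <| (Equiv.ofBijective E hE.bijective_of_finite).subtypeEquiv hC
  have horth := LinearMap.BilinForm.finrank_orthogonal (.ofSeparatingRight hb) C
  have hle := Submodule.finrank_le C
  rw [← finrank_eq_of_natCard_eq hcard] at horth
  omega

theorem two_mul_finrank_comap_range_eq (b : LinearMap.BilinForm K V) (hb : b.SeparatingRight)
    {E : V → V} (hE : Function.Injective E) {P : V →ₗ[K] V} (hP : IsIdempotentElem P)
    (hPb : ∀ v w, b (P v) w = b v (P w)) (hEP : ∀ v, E (P v) = P (E v))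
    {C : Submodule K V} (hPC : ∀ c ∈ C, P c ∈ C) (hC : ∀ v, v ∈ C ↔ ∀ c ∈ C, b c (E v) = 0) :
    2 * finrank K (C.comap (LinearMap.range P).subtype) = finrank K (LinearMap.range P) := by
  set U := LinearMap.range P
  have hPU {v : V} (hv : v ∈ U) : P v = v := LinearMap.IsIdempotentElem.mem_range_iff hP |>.mp hv
  have hEU {v : V} (hv : v ∈ U) : E v ∈ U := by
    rw [← hPU hv, hEP]
    exact LinearMap.mem_range_self P _
  have hbU (w : V) {v : V} (hv : v ∈ U) : b w v = b (P w) v := by rw [hPb, hPU hv]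
  refine two_mul_finrank_eq_of_forall_mem_iff (b.restrict U) ?_
    (E := fun v ↦ ⟨E v, hEU v.2⟩) (fun v w h ↦ Subtype.ext (hE congr($h.1))) fun v ↦ ?_
  · intro v hv
    refine Subtype.ext (hb v fun w ↦ ?_)
    rw [hbU w v.2]
    exact hv ⟨P w, LinearMap.mem_range_self P w⟩
  · refine (hC v).trans ⟨fun h c hc ↦ h c hc, fun h c hc ↦ ?_⟩
    rw [hbU c (hEU v.2)]
    exact h ⟨P c, LinearMap.mem_range_self P c⟩ (hPC c hc)

end SelfDual

section DotProduct

variable {K R ι : Type*} [Field K] [CommRing R] [Algebra K R] [Fintype ι]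

def dotProductTraceForm (τ : R →ₗ[K] K) : LinearMap.BilinForm K (ι → R) :=
  (dotProductBilin K K).compr₂ τ

@[simp]
theorem dotProductTraceForm_apply (τ : R →ₗ[K] K) (v w : ι → R) :
    dotProductTraceForm τ v w = τ (v ⬝ᵥ w) := rfl

variable {τ : R →ₗ[K] K}

theorem separatingRight_dotProductTraceForm (hτ : ∀ x, (∀ y, τ (y * x) = 0) → x = 0) :
    (dotProductTraceForm τ : LinearMap.BilinForm K (ι → R)).SeparatingRight := by
  classical
  intro v hv
  funext i
  exact hτ (v i) fun y ↦ by simpa using hv (Pi.single i y)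

theorem forall_dotProduct_eq_zero_iff (hτ : ∀ x, (∀ y, τ (y * x) = 0) → x = 0)
    {C : Submodule R (ι → R)} {w : ι → R} :
    (∀ c ∈ C, c ⬝ᵥ w = 0) ↔ ∀ c ∈ C, τ (c ⬝ᵥ w) = 0 := by
  refine ⟨fun h c hc ↦ by rw [h c hc, map_zero], fun h c hc ↦ hτ _ fun y ↦ ?_⟩
  rw [← smul_eq_mul, ← smul_dotProduct]
  exact h _ (C.smul_mem y hc)

theorem two_mul_finrank_restrictScalars_eq [Finite K] [FiniteDimensional K R]
    (hτ : ∀ x, (∀ y, τ (y * x) = 0) → x = 0) {bar : R →+* R} (hbar : Function.Injective bar)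
    {C : Submodule R (ι → R)}
    (hC : ∀ v, v ∈ C ↔ ∀ c ∈ C, c ⬝ᵥ (bar ∘ v) = 0) :
    2 * finrank K (C.restrictScalars K) = Fintype.card ι * finrank K R := by
  have hE : Function.Injective (bar ∘ · : (ι → R) → ι → R) := hbar.comp_left
  rw [two_mul_finrank_eq_of_forall_mem_iff _ (separatingRight_dotProductTraceForm hτ) hE
    fun v ↦ (hC v).trans (forall_dotProduct_eq_zero_iff hτ)]
  simp [finrank_pi_fintype]

end DotProduct

namespace AdjoinRoot

variable {F : Type*} [Field F]

noncomputable def topCoeff (N : ℕ) : AdjoinRoot (X ^ N : F[X]) →ₗ[F] F :=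
  lcoeff F (N - 1) ∘ₗ modByMonicHom (monic_X_pow N)

theorem topCoeff_mk {N : ℕ} (hN : 0 < N) (p : F[X]) :
    topCoeff N (mk (X ^ N) p) = p.coeff (N - 1) := by
  rw [topCoeff, LinearMap.comp_apply, modByMonicHom_mk, lcoeff_apply,
    modByMonic_eq_sub_mul_div p (X ^ N), coeff_sub, coeff_X_pow_mul', if_neg (by omega), sub_zero]

theorem eq_zero_of_forall_topCoeff_mul_eq_zero {N : ℕ} {x : AdjoinRoot (X ^ N : F[X])}
    (hx : ∀ y, topCoeff N (y * x) = 0) : x = 0 := by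
  obtain ⟨p, rfl⟩ := mk_surjective x
  refine mk_eq_zero.mpr (X_pow_dvd_iff.mpr fun d hd ↦ ?_)
  have := hx (mk _ (X ^ (N - 1 - d)))
  rwa [← map_mul, topCoeff_mk (by omega), coeff_X_pow_mul', if_pos (by omega),
    show N - 1 - (N - 1 - d) = d by omega] at this

theorem finrank_X_pow (N : ℕ) : finrank F (AdjoinRoot (X ^ N : F[X])) = N := by
  rw [(powerBasis' (monic_X_pow N)).finrank, powerBasis'_dim, natDegree_X_pow]

theorem involutive_of_map_algebraMap_eq_pow [Fintype F] {g : F[X]} {r : ℕ}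
    (hcard : Fintype.card F = r ^ 2) {bar : AdjoinRoot g →+* AdjoinRoot g}
    (hbar : ∀ a : F, bar (algebraMap F _ a) = algebraMap F _ (a ^ r))
    (hroot : bar (root g) = root g) : Function.Involutive bar := by
  have : bar.comp bar = RingHom.id _ := by
    refine ringHom_ext (RingHom.ext fun a ↦ ?_) (by simp [hroot])
    simp only [RingHom.comp_apply, ← algebraMap_eq, hbar, RingHom.id_apply, ← pow_mul, ← sq,
      ← hcard, FiniteField.pow_card]
  exact RingHom.congr_fun this

end AdjoinRoot

section FiberAverage

variable (K A H : Type*) [Field K] [Fintype A]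

def fiberAverage : (A × H → K) →ₗ[K] (A × H → K) where
  toFun f x := (Fintype.card A : K)⁻¹ * ∑ a, f (a, x.2)
  map_add' f g := by
    funext x
    simp [Finset.sum_add_distrib, mul_add]
  map_smul' c f := by
    funext x
    simp [Finset.mul_sum, mul_left_comm]

variable {K A H}

theorem fiberAverage_apply (f : A × H → K) (x : A × H) :
    fiberAverage K A H f x = (Fintype.card A : K)⁻¹ * ∑ a, f (a, x.2) := rfl

theorem fiberAverage_comp_snd (hA : (Fintype.card A : K) ≠ 0) (g : H → K) :
    fiberAverage K A H (g ∘ Prod.snd) = g ∘ Prod.snd := by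
  funext x
  simp [fiberAverage_apply, inv_mul_cancel_left₀ hA]

theorem isIdempotentElem_fiberAverage (hA : (Fintype.card A : K) ≠ 0) :
    IsIdempotentElem (fiberAverage K A H) :=
  LinearMap.ext fun f ↦ fiberAverage_comp_snd hA fun h ↦ (Fintype.card A : K)⁻¹ * ∑ a, f (a, h)

theorem fiberAverage_dotProduct_eq_sum [Fintype H] (f g : A × H → K) :
    fiberAverage K A H f ⬝ᵥ g =
      (Fintype.card A : K)⁻¹ * ∑ h, (∑ a, f (a, h)) * ∑ a, g (a, h) := by
  simp only [dotProduct, fiberAverage_apply, Fintype.sum_prod_type_right, mul_assoc,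
    ← Finset.mul_sum]

theorem fiberAverage_dotProduct [Fintype H] (f g : A × H → K) :
    fiberAverage K A H f ⬝ᵥ g = f ⬝ᵥ fiberAverage K A H g := by
  simp only [dotProduct_comm f, fiberAverage_dotProduct_eq_sum, mul_comm (∑ a, f _)]

theorem map_comp_fiberAverage (σ : K →+* K) (f : A × H → K) :
    σ ∘ fiberAverage K A H f = fiberAverage K A H (σ ∘ f) := by
  funext x
  simp [fiberAverage_apply, map_sum]

theorem range_fiberAverage (hA : (Fintype.card A : K) ≠ 0) :
    LinearMap.range (fiberAverage K A H) = LinearMap.range (LinearMap.funLeft K K Prod.snd) := by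
  apply le_antisymm <;> rintro _ ⟨f, rfl⟩
  · exact ⟨fun h ↦ (Fintype.card A : K)⁻¹ * ∑ a, f (a, h), rfl⟩
  · exact ⟨_, fiberAverage_comp_snd hA f⟩

theorem finrank_range_fiberAverage [Nonempty A] [Fintype H] (hA : (Fintype.card A : K) ≠ 0) :
    finrank K (LinearMap.range (fiberAverage K A H)) = Fintype.card H := by
  rw [range_fiberAverage hA, LinearMap.finrank_range_of_inj
    (LinearMap.funLeft_injective_of_surjective _ _ _ Prod.snd_surjective),
    finrank_fintype_fun_eq_card]

end FiberAverage

namespace AddMonoidAlgebra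

variable (K A H : Type*) [Field K] [AddCommGroup A] [Fintype A] [AddCommGroup H]

noncomputable def fiberAverageElem : K[A × H] := ∑ a : A, single (a, 0) (Fintype.card A : K)⁻¹

variable {K A H}

theorem coeff_fiberAverageElem_mul (s : K[A × H]) (x : A × H) :
    (fiberAverageElem K A H * s).coeff x = fiberAverage K A H (fun y ↦ s.coeff y) x := by
  obtain ⟨a₀, h⟩ := x
  simp only [fiberAverageElem, Finset.sum_mul, coeff_sum, Finsupp.finsetSum_apply,
    coeff_single_mul_apply, fiberAverage_apply, ← Finset.mul_sum]
  congr 1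
  exact Fintype.sum_equiv (Equiv.subLeft a₀) _ _ fun a ↦ by simp [sub_eq_neg_add]

theorem mapDomainRingHom_fiberAverageElem {Z B : Type*} [AddCommGroup Z] [AddCommGroup B] :
    mapDomainRingHom K ((AddMonoidHom.id A).prodMap ((AddMonoidHom.id Z).prod (0 : Z →+ B)))
      (fiberAverageElem K A Z) = fiberAverageElem K A (Z × B) := by
  simp [fiberAverageElem, mapDomain_single, Prod.mk_zero_zero]

theorem smul_eq_mapDomainRingHom_single_zero_mul {M N : Type*} [AddMonoid M] [AddMonoid N]
    (f : M →+ N) (a : K) (x : K[N]) : a • x = mapDomainRingHom K f (single 0 a) * x := by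
  ext
  simp only [mapDomainRingHom_apply, mapDomain_single, map_zero, coeff_single_zero_mul,
    AddMonoidAlgebra.coeff_smul, Finsupp.smul_apply, smul_eq_mul]

end AddMonoidAlgebra

open AddMonoidAlgebra in
theorem even_card_mul_card_of_eq_hermitianDual {K A Z B : Type*} [Field K] [Finite K]
    [AddCommGroup A] [Fintype A] [AddCommGroup Z] [Fintype Z] [AddCommGroup B] [Fintype B]
    (hA : (Fintype.card A : K) ≠ 0) {σ : K →+* K} [Module K[A × Z] K[A × Z × B]]
    (hsmul : ∀ (t : K[A × Z]) (x : K[A × Z × B]), t • x = mapDomainRingHom K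
      ((AddMonoidHom.id A).prodMap ((AddMonoidHom.id Z).prod (0 : Z →+ B))) t * x)
    {C : Submodule K[A × Z] K[A × Z × B]}
    (hC : ∀ v, v ∈ C ↔ ∀ c ∈ C, ∑ g, c.coeff g * σ (v.coeff g) = 0) :
    Even (Fintype.card Z * Fintype.card B) := by
  set φ := mapDomainRingHom K
    ((AddMonoidHom.id A).prodMap ((AddMonoidHom.id Z).prod (0 : Z →+ B)))
  have hφ (t : K[A × Z]) {x : K[A × Z × B]} (hx : x ∈ C) : φ t * x ∈ C :=
    hsmul t x ▸ C.smul_mem t hx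
  let CK : Submodule K K[A × Z × B] :=
    { carrier := C
      add_mem' := C.add_mem
      zero_mem' := C.zero_mem
      smul_mem' := fun a x hx ↦
        smul_eq_mapDomainRingHom_single_zero_mul (M := A × Z) _ a x ▸ hφ _ hx }
  let Φ := (coeffLinearEquiv K).trans (Finsupp.linearEquivFunOnFinite K K (A × Z × B))
  let Cfun := CK.comap Φ.symm.toLinearMap
  have hCfun : ∀ f, f ∈ Cfun ↔ ∀ c ∈ Cfun, dotProductTraceForm LinearMap.id c (σ ∘ f) = 0 := fun f ↦
    (hC (Φ.symm f)).trans Φ.symm.surjective.forall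
  have hPCfun : ∀ c ∈ Cfun, fiberAverage K A (Z × B) c ∈ Cfun := by
    intro c hc
    have : Φ.symm (fiberAverage K A (Z × B) c) = φ (fiberAverageElem K A Z) * Φ.symm c := by
      rw [mapDomainRingHom_fiberAverageElem]
      ext g
      simp [Φ, coeff_fiberAverageElem_mul]
    change Φ.symm _ ∈ C
    rw [this]
    exact hφ _ hc
  have := two_mul_finrank_comap_range_eq (dotProductTraceForm LinearMap.id)
    (separatingRight_dotProductTraceForm fun x h ↦ by simpa using h 1) σ.injective.comp_left
    (isIdempotentElem_fiberAverage hA) fiberAverage_dotProduct (map_comp_fiberAverage σ)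
    hPCfun hCfun
  rw [finrank_range_fiberAverage hA, Fintype.card_prod] at this
  exact even_iff_two_dvd.mpr (Dvd.intro _ this)

theorem stmt_19_general (r n : ℕ)
    (F : Type*) [Field F] [Fintype F] (hcard : Fintype.card F = r ^ 2)
    (bar : R3 F →+* R3 F)
    (hbar1 : ∀ a : F, bar (algebraMap F (R3 F) a) = algebraMap F (R3 F) (a ^ r))
    (hbar2 : bar (AdjoinRoot.root ((X : Polynomial F) ^ 3)) =
      AdjoinRoot.root ((X : Polynomial F) ^ 3))
    (m : ℕ)
    (F3 : Type*) [Field F3] [Fintype F3] (hF3 : Fintype.card F3 = 3 ^ (2 * m))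
    (A : Type*) [AddCommGroup A] [Fintype A] (hA : ¬ (3 : ℕ) ∣ Fintype.card A)
    (B : Type*) [AddCommGroup B] [Fintype B]
    [Module (AddMonoidAlgebra F3 (A × ZMod 3))
      (AddMonoidAlgebra F3 (A × ZMod 3 × B))]
    (hsmul : ∀ (a : AddMonoidAlgebra F3 (A × ZMod 3))
        (x : AddMonoidAlgebra F3 (A × ZMod 3 × B)),
      a • x = AddMonoidAlgebra.mapDomainRingHom F3
        ((AddMonoidHom.id A).prodMap
          ((AddMonoidHom.id (ZMod 3)).prod (0 : ZMod 3 →+ B))) a * x) :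
    (Odd n → ¬ ∃ C : Submodule (R3 F) (Fin n → R3 F),
      (C : Set (Fin n → R3 F)) = HdualR bar C) ∧
    (Odd (Fintype.card B) →
      ¬ ∃ C : Submodule (AddMonoidAlgebra F3 (A × ZMod 3))
          (AddMonoidAlgebra F3 (A × ZMod 3 × B)),
        (C : Set (AddMonoidAlgebra F3 (A × ZMod 3 × B))) =
          { v | ∀ c ∈ C, ∑ g : A × ZMod 3 × B, c.coeff g * (v.coeff g) ^ (3 ^ m) = 0 }) := by
  refine ⟨fun hn ⟨C, hC⟩ ↦ ?_, fun hB ⟨C, hC⟩ ↦ ?_⟩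
  · have : Module.Finite F (R3 F) := (monic_X_pow 3).finite_adjoinRoot
    have := two_mul_finrank_restrictScalars_eq
      (fun _ ↦ AdjoinRoot.eq_zero_of_forall_topCoeff_mul_eq_zero)
      (AdjoinRoot.involutive_of_map_algebraMap_eq_pow hcard hbar1 hbar2).injective
      (C := C) fun v ↦ Set.ext_iff.mp hC v
    rw [Fintype.card_fin, AdjoinRoot.finrank_X_pow] at this
    obtain ⟨k, rfl⟩ := hn
    omega
  · have : CharP F3 3 := charP_of_card_eq_prime_pow hF3
    have := even_card_mul_card_of_eq_hermitianDual (A := A) (Z := ZMod 3)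
      (by rwa [Ne, CharP.cast_eq_zero_iff F3 3]) (σ := iterateFrobenius F3 3 m) hsmul (C := C)
      fun v ↦ by simpa [iterateFrobenius_def] using Set.ext_iff.mp hC v
    rw [ZMod.card, Nat.even_mul] at this
    exact (Nat.not_even_iff_odd.mpr hB) (this.resolve_left (by decide))

/-- Let `q = r^2` be a square and `n` odd.  Then there are no Hermitian
self-dual linear codes of length `n` over `F_q[u]/(u^3)`; consequently, for
`F_{3^{2m}}` (so that the Hermitian conjugation is `a ↦ a^{3^m}`), there are no
Hermitian self-dual `A × Z_3`-quasi-abelian codes in `F_{3^{2m}}[A × Z_3 × B]`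
whenever `|B|` is odd. -/
theorem stmt_19 (p j r n : ℕ) (hp : p.Prime) (hj : 1 ≤ j) (hr : r = p ^ j)
    (F : Type*) [Field F] [Fintype F] (hcard : Fintype.card F = r ^ 2)
    (bar : R3 F →+* R3 F)
    (hbar1 : ∀ a : F, bar (algebraMap F (R3 F) a) = algebraMap F (R3 F) (a ^ r))
    (hbar2 : bar (AdjoinRoot.root ((X : Polynomial F) ^ 3)) =
      AdjoinRoot.root ((X : Polynomial F) ^ 3))
    (m : ℕ) (hm : 1 ≤ m)
    (F3 : Type*) [Field F3] [Fintype F3] (hF3 : Fintype.card F3 = 3 ^ (2 * m))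
    (A : Type*) [AddCommGroup A] [Fintype A] (hA : ¬ (3 : ℕ) ∣ Fintype.card A)
    (B : Type*) [AddCommGroup B] [Fintype B]
    [Module (AddMonoidAlgebra F3 (A × ZMod 3))
      (AddMonoidAlgebra F3 (A × ZMod 3 × B))]
    (hsmul : ∀ (a : AddMonoidAlgebra F3 (A × ZMod 3))
        (x : AddMonoidAlgebra F3 (A × ZMod 3 × B)),
      a • x = AddMonoidAlgebra.mapDomainRingHom F3
        ((AddMonoidHom.id A).prodMap
          ((AddMonoidHom.id (ZMod 3)).prod (0 : ZMod 3 →+ B))) a * x) :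
    (Odd n → ¬ ∃ C : Submodule (R3 F) (Fin n → R3 F),
      (C : Set (Fin n → R3 F)) = HdualR bar C) ∧
    (Odd (Fintype.card B) →
      ¬ ∃ C : Submodule (AddMonoidAlgebra F3 (A × ZMod 3))
          (AddMonoidAlgebra F3 (A × ZMod 3 × B)),
        (C : Set (AddMonoidAlgebra F3 (A × ZMod 3 × B))) =
          { v | ∀ c ∈ C, ∑ g : A × ZMod 3 × B, c.coeff g * (v.coeff g) ^ (3 ^ m) = 0 }) :=
  stmt_19_general r n F hcard bar hbar1 hbar2 m F3 hF3 A hA B hsmul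
end
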